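/- Let 3 ≤ a ≤ b, both a and b even, and b ≤ 3a/2 − 2. Then every (a,b)-regular weighted graph of girth 4 has at least a+b+2 vertices, and one with exactly a+b+2 vertices exists; hence n(a,b,4) = a+b+2. -/

import Mathlib

/-!
A vertex together with its `a` light and `b` heavy neighbours already gives `a + b + 1` vertices.
The light graph `L` is `a`-regular and triangle-free, since a light triangle weighs 3. On exactly
`a + b + 1` vertices, an odd number below `5a/2`, `L` cannot be bipartite (a regular bipartite graph
has as many vertices on each side), so it has a shortest odd closed walk, of length `ℓ ≥ 5`. By
minimality every vertex is adjacent to at most two positions of that walk, and double counting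
gives `ℓ a ≤ 2 (a + b + 1) < 5a`, a contradiction.

For the construction, on `ℤ/(a+b+2)` let `x, y` be light neighbours when
`x + y ∈ {1, 3, …, 2a-1}` and heavy neighbours when `x ≠ y` and `x + y` is neither there nor
`2a + 1`. All these sums are odd while `x + x` is even, which gives the degrees `a` and `b` and
makes `L` bipartite; and `0, 1, 2, 3` is a light 4-cycle.
-/

open Classical in
/-- Weight of a walk in `L ⊔ H`: light edges (in `L`) weigh 1, heavy edges weigh 2. -/
noncomputable def wWeight {V : Type*} (L H : SimpleGraph V) {u : V}
    (w : (L ⊔ H).Walk u u) : ℕ :=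
  (w.edges.map fun e => if e ∈ L.edgeSet then 1 else 2).sum

/-- `(L,H)` is an `(a,b)`-regular weighted graph of girth `g`. -/
def IsWGraph {V : Type*} (L H : SimpleGraph V) (a b g : ℕ) : Prop :=
  Disjoint L H ∧
  (∀ v, (L.neighborSet v).ncard = a) ∧
  (∀ v, (H.neighborSet v).ncard = b) ∧
  (∃ (u : V) (w : (L ⊔ H).Walk u u), w.IsCycle ∧ wWeight L H w = g) ∧
  (∀ (u : V) (w : (L ⊔ H).Walk u u), w.IsCycle → g ≤ wWeight L H w)

open Finset

namespace SimpleGraph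

variable {V : Type*} {G : SimpleGraph V}

lemma isRegularOfDegree_of_ncard_neighborSet [Fintype V] [DecidableRel G.Adj] {d : ℕ}
    (h : ∀ v, (G.neighborSet v).ncard = d) : G.IsRegularOfDegree d := fun v => by
  rw [← card_neighborSet_eq_degree, ← Set.toFinset_card, ← Set.ncard_eq_toFinset_card', h]

namespace Walk

lemma exists_walk_getVert_getVert {u v : V} (p : G.Walk u v) {i j : ℕ} (hij : i ≤ j)
    (hj : j ≤ p.length) : ∃ q : G.Walk (p.getVert i) (p.getVert j), q.length = j - i :=
  ⟨((p.drop i).take (j - i)).copy rfl (by rw [drop_getVert, Nat.add_sub_cancel' hij]),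
    by simp; omega⟩

lemma exists_walk_getVert_getVert_of_closed {u : V} (p : G.Walk u u) {i j : ℕ} (hij : i ≤ j)
    (hj : j ≤ p.length) :
    ∃ q : G.Walk (p.getVert j) (p.getVert i), q.length = p.length - (j - i) :=
  ⟨(p.drop j).append (p.take i), by simp; omega⟩

lemma isCycle_cons_cons_cons_cons {x y z t : V} (hxy : G.Adj x y) (hyz : G.Adj y z)
    (hzt : G.Adj z t) (htx : G.Adj t x) (hxz : x ≠ z) (hyt : y ≠ t) :
    (cons hxy (cons hyz (cons hzt (cons htx nil)))).IsCycle := by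
  simp [isCycle_def, isTrail_def, hxy.ne, hyz.ne, hzt.ne, htx.ne, htx.ne', hxz, hyt]
  aesop

end Walk

lemma exists_odd_closed_walk_forall_odd_le (hG : ¬ G.IsBipartite) :
    ∃ (u : V) (w : G.Walk u u), Odd w.length ∧
      ∀ (x : V) (q : G.Walk x x), Odd q.length → w.length ≤ q.length := by
  classical
  have hex : ∃ k, ∃ (u : V) (w : G.Walk u u), Odd w.length ∧ w.length = k := by
    simp only [IsBipartite, two_colorable_iff_forall_loop_even, not_forall,
      Nat.not_even_iff_odd] at hG
    obtain ⟨u, w, hw⟩ := hG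
    exact ⟨_, u, w, hw, rfl⟩
  obtain ⟨u, w, hodd, hlen⟩ := Nat.find_spec hex
  exact ⟨u, w, hodd, fun x q hq => hlen ▸ Nat.find_min' hex ⟨x, q, hq, rfl⟩⟩

lemma five_le_length_of_odd_of_cliqueFree_three (hG : G.CliqueFree 3) {u : V} (w : G.Walk u u)
    (hodd : Odd w.length) : 5 ≤ w.length := by
  have h1 : w.length ≠ 1 := fun h => by
    have h01 := w.adj_getVert_succ (i := 0) (by omega)
    rw [zero_add, ← h, Walk.getVert_length, Walk.getVert_zero] at h01
    exact G.loopless.irrefl u h01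
  have h3 : w.length ≠ 3 := fun h => by
    classical
    have h01 := w.adj_getVert_succ (i := 0) (by omega)
    have h12 := w.adj_getVert_succ (i := 1) (by omega)
    have h20 := w.adj_getVert_succ (i := 2) (by omega)
    rw [show 2 + 1 = w.length by omega, Walk.getVert_length] at h20
    rw [zero_add, Walk.getVert_zero] at h01
    exact hG _ (is3Clique_triple_iff.mpr ⟨h01, h20.symm, h12⟩)
  obtain ⟨k, hk⟩ := hodd
  omega

lemma IsBipartite.even_card_of_isRegularOfDegree [Fintype V] [DecidableRel G.Adj]
    (hG : G.IsBipartite) {d : ℕ} (hreg : G.IsRegularOfDegree d) (hd : d ≠ 0) :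
    Even (Fintype.card V) := by
  classical
  obtain ⟨s, t, hst⟩ := hG.exists_isBipartiteWith
  have hst' : G.IsBipartiteWith ↑s.toFinset ↑t.toFinset := by simpa using hst
  have hs := isBipartiteWith_sum_degrees_eq_card_edges hst'
  have hV := sum_degrees_eq_twice_card_edges G
  simp only [hreg.degree_eq, sum_const, smul_eq_mul, card_univ] at hs hV
  exact ⟨#s.toFinset, Nat.eq_of_mul_eq_mul_right (Nat.pos_of_ne_zero hd) (by linarith)⟩

section ShortestOddClosedWalk

variable {u : V} {w : G.Walk u u} (hodd : Odd w.length)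
  (hmin : ∀ (x : V) (q : G.Walk x x), Odd q.length → w.length ≤ q.length)
include hodd hmin

/- Joining `v` to the two arcs of `w` between positions `i` and `j` gives closed walks of lengths
`j - i + 2` and `w.length - (j - i) + 2`; the odd one of them is no shorter than `w`. -/
lemma sub_eq_two_or_eq_length_sub_two_of_adj_getVert {v : V} {i j : ℕ} (hij : i < j)
    (hj : j < w.length) (hvi : G.Adj v (w.getVert i)) (hvj : G.Adj v (w.getVert j)) :
    j - i = 2 ∨ j - i = w.length - 2 := by
  obtain ⟨q, hq⟩ := w.exists_walk_getVert_getVert hij.le hj.le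
  obtain ⟨q', hq'⟩ := w.exists_walk_getVert_getVert_of_closed hij.le hj.le
  obtain ⟨k, hk⟩ := hodd
  rcases Nat.even_or_odd (j - i) with ⟨m, hm⟩ | ⟨m, hm⟩
  · have := hmin v (.cons hvj (q'.append (.cons hvi.symm .nil)))
      ⟨k - m + 1, by simp [hq']; omega⟩
    simp [hq'] at this
    omega
  · have := hmin v (.cons hvi (q.append (.cons hvj.symm .nil)))
      ⟨m + 1, by simp [hq]; omega⟩
    simp [hq] at this
    omega

lemma card_filter_adj_getVert_le_two (h3 : w.length ≠ 3) (v : V) [DecidablePred (G.Adj v)] :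
    #{i ∈ range w.length | G.Adj v (w.getVert i)} ≤ 2 := by
  by_contra! hcard
  obtain ⟨i, hi, j, hj, k, hk, hij, hik, hjk⟩ := two_lt_card.mp hcard
  simp only [mem_filter, mem_range] at hi hj hk
  have gap : ∀ {p q : ℕ}, p < w.length → q < w.length → G.Adj v (w.getVert p) →
      G.Adj v (w.getVert q) → p < q → q - p = 2 ∨ q - p = w.length - 2 :=
    fun hp hq hvp hvq hpq =>
      sub_eq_two_or_eq_length_sub_two_of_adj_getVert hodd hmin hpq hq hvp hvq
  have := gap hi.1 hj.1 hi.2 hj.2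
  have := gap hj.1 hi.1 hj.2 hi.2
  have := gap hi.1 hk.1 hi.2 hk.2
  have := gap hk.1 hi.1 hk.2 hi.2
  have := gap hj.1 hk.1 hj.2 hk.2
  have := gap hk.1 hj.1 hk.2 hj.2
  obtain ⟨m, hm⟩ := hodd
  omega

lemma length_mul_le_card_mul_two [Fintype V] [DecidableRel G.Adj] (h3 : w.length ≠ 3) {d : ℕ}
    (hreg : G.IsRegularOfDegree d) : w.length * d ≤ Fintype.card V * 2 := by
  have := card_mul_le_card_mul (s := range w.length) (t := univ)
    (fun i v => G.Adj (w.getVert i) v) (m := d) (n := 2)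
    (fun i _ => by simp [bipartiteAbove, ← neighborFinset_eq_filter, hreg.degree_eq])
    (fun v _ => by
      simpa [bipartiteBelow, adj_comm] using card_filter_adj_getVert_le_two hodd hmin h3 v)
  simpa using this

end ShortestOddClosedWalk

theorem even_card_of_cliqueFree_three_of_isRegularOfDegree [Fintype V] [DecidableRel G.Adj]
    (hG : G.CliqueFree 3) {d : ℕ} (hreg : G.IsRegularOfDegree d)
    (hcard : 2 * Fintype.card V < 5 * d) : Even (Fintype.card V) := by
  by_cases hbip : G.IsBipartite
  · exact hbip.even_card_of_isRegularOfDegree hreg (by omega)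
  obtain ⟨u, w, hodd, hmin⟩ := exists_odd_closed_walk_forall_odd_le hbip
  have h5 := five_le_length_of_odd_of_cliqueFree_three hG w hodd
  have := length_mul_le_card_mul_two hodd hmin (by omega) hreg
  nlinarith

section SumGraph

variable {A : Type*} [AddCommGroup A] {S : Set A} {x : A}

def sumGraph (S : Set A) : SimpleGraph A where
  Adj x y := x ≠ y ∧ x + y ∈ S
  symm := ⟨fun x y h => ⟨h.1.symm, add_comm x y ▸ h.2⟩⟩
  loopless := ⟨fun _ h => h.1 rfl⟩

@[simp]
lemma sumGraph_adj {y : A} : (sumGraph S).Adj x y ↔ x ≠ y ∧ x + y ∈ S := Iff.rfl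

lemma neighborSet_sumGraph : (sumGraph S).neighborSet x = (· - x) '' S \ {x} := by
  ext y
  simp [ne_comm, sub_eq_iff_eq_add, add_comm x, and_comm]

lemma ncard_neighborSet_sumGraph_of_add_self_notMem (h : x + x ∉ S) :
    ((sumGraph S).neighborSet x).ncard = S.ncard := by
  rw [neighborSet_sumGraph, Set.sdiff_singleton_eq_self (by simpa [sub_eq_iff_eq_add] using h),
    Set.ncard_image_of_injective _ sub_left_injective]

lemma ncard_neighborSet_sumGraph_of_add_self_mem [Finite A] (h : x + x ∈ S) :
    ((sumGraph S).neighborSet x).ncard = S.ncard - 1 := by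
  rw [neighborSet_sumGraph,
    Set.ncard_sdiff_singleton_of_mem (by simpa [sub_eq_iff_eq_add] using h),
    Set.ncard_image_of_injective _ sub_left_injective]

lemma add_self_notMem_of_forall_eq_one (φ : A →+ ZMod 2) (hS : ∀ s ∈ S, φ s = 1) (x : A) :
    x + x ∉ S := fun h => by
  have := hS _ h
  rw [map_add] at this
  generalize φ x = c at this
  revert c; decide

lemma colorable_two_sumGraph (φ : A →+ ZMod 2) (hS : ∀ s ∈ S, φ s = 1) :
    (sumGraph S).Colorable 2 :=
  ⟨Coloring.mk φ fun {x y} h hxy => by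
    have := hS _ (sumGraph_adj.mp h).2
    rw [map_add, hxy] at this
    generalize φ y = c at this
    revert c; decide⟩

end SumGraph

end SimpleGraph

open SimpleGraph

section Weight

variable {V : Type*} {L H : SimpleGraph V}

open Classical in
lemma wWeight_eq_length_add_countP {u : V} (w : (L ⊔ H).Walk u u) :
    wWeight L H w = w.length + w.edges.countP (fun e => e ∉ L.edgeSet) := by
  rw [wWeight, ← Walk.length_edges]
  induction w.edges with
  | nil => simp
  | cons e l ih => by_cases he : e ∈ L.edgeSet <;> simp [he, ih] <;> omega

lemma length_le_wWeight {u : V} (w : (L ⊔ H).Walk u u) : w.length ≤ wWeight L H w := by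
  rw [wWeight_eq_length_add_countP]; omega

lemma edges_subset_edgeSet_of_wWeight_le_length {u : V} {w : (L ⊔ H).Walk u u}
    (hw : wWeight L H w ≤ w.length) : ∀ e ∈ w.edges, e ∈ L.edgeSet := by
  classical
  rw [wWeight_eq_length_add_countP] at hw
  simpa using List.countP_eq_zero.mp (by omega : w.edges.countP (fun e => e ∉ L.edgeSet) = 0)

lemma wWeight_mapLe {u : V} (w : L.Walk u u) :
    wWeight L H (w.mapLe le_sup_left) = w.length := by
  classical
  rw [wWeight_eq_length_add_countP, Walk.length_mapLe, Walk.edges_mapLe_eq_edges,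
    List.countP_eq_zero.mpr (by simpa using fun e he => w.edges_subset_edgeSet he), add_zero]

lemma isWGraph_four_of_cliqueFree_three {a b : ℕ} (hdisj : Disjoint L H)
    (hL : ∀ v, (L.neighborSet v).ncard = a) (hH : ∀ v, (H.neighborSet v).ncard = b)
    (hfree : L.CliqueFree 3) (h4 : ∃ (u : V) (w : L.Walk u u), w.IsCycle ∧ w.length = 4) :
    IsWGraph L H a b 4 := by
  refine ⟨hdisj, hL, hH, ?_, fun u w hw => ?_⟩
  · obtain ⟨u, w, hw, hlen⟩ := h4
    exact ⟨u, w.mapLe le_sup_left, hw.mapLe _, by rw [wWeight_mapLe, hlen]⟩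
  by_contra! hlt
  have h3 := hw.three_le_length
  have hle := length_le_wWeight w
  have hwL := edges_subset_edgeSet_of_wWeight_le_length (by omega : wWeight L H w ≤ w.length)
  obtain ⟨s, hs⟩ := is3Clique_iff_exists_cycle_length_three.mpr
    ⟨u, w.transfer L hwL, hw.transfer hwL, by rw [Walk.length_transfer]; omega⟩
  exact hfree s hs

namespace IsWGraph

variable {a b g : ℕ}

lemma cliqueFree_three (hG : IsWGraph L H a b g) (hg : 3 < g) : L.CliqueFree 3 := by
  intro s hs
  obtain ⟨u, w, hw, hlen⟩ := is3Clique_iff_exists_cycle_length_three.mp ⟨s, hs⟩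
  have := hG.2.2.2.2 u (w.mapLe le_sup_left) (hw.mapLe _)
  rw [wWeight_mapLe] at this
  omega

lemma add_add_one_le_card [Finite V] (hG : IsWGraph L H a b g) : a + b + 1 ≤ Nat.card V := by
  obtain ⟨hdisj, hL, hH, ⟨u, -⟩, -⟩ := hG
  have hdisj' : Disjoint (L.neighborSet u) (H.neighborSet u) :=
    Set.disjoint_left.mpr fun v hL hH => hdisj.le_bot ⟨hL, hH⟩
  have hu : u ∉ L.neighborSet u ∪ H.neighborSet u := by simp
  calc a + b + 1 = (insert u (L.neighborSet u ∪ H.neighborSet u)).ncard := by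
        rw [Set.ncard_insert_of_notMem hu, Set.ncard_union_eq hdisj', hL, hH]
    _ ≤ Nat.card V := Set.ncard_le_card _

lemma add_add_two_le_card [Finite V] (hG : IsWGraph L H a b 4) (hpar : Even (a + b))
    (h : 2 * (a + b + 1) < 5 * a) : a + b + 2 ≤ Nat.card V := by
  classical
  have := Fintype.ofFinite V
  have h1 := hG.add_add_one_le_card
  by_contra! hlt
  have hcard : Fintype.card V = a + b + 1 := by rw [← Nat.card_eq_fintype_card]; omega
  have heven := even_card_of_cliqueFree_three_of_isRegularOfDegree
    (hG.cliqueFree_three (by norm_num)) (isRegularOfDegree_of_ncard_neighborSet hG.2.1) (by omega)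
  rw [hcard] at heven
  exact Nat.not_even_iff_odd.mpr hpar.add_one heven

end IsWGraph

end Weight

section Construction

variable {n a : ℕ}

def oddResidues (n a : ℕ) : Finset (ZMod n) :=
  (range a).image fun k => ((2 * k + 1 : ℕ) : ZMod n)

lemma natCast_mem_oddResidues {k : ℕ} (hk : k < a) :
    ((2 * k + 1 : ℕ) : ZMod n) ∈ oddResidues n a :=
  mem_image_of_mem _ (mem_range.mpr hk)

lemma ZMod.eq_of_natCast_eq_of_lt {i j : ℕ} (hi : i < n) (hj : j < n)
    (h : (i : ZMod n) = j) : i = j := by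
  rwa [ZMod.natCast_eq_natCast_iff', Nat.mod_eq_of_lt hi, Nat.mod_eq_of_lt hj] at h

lemma card_oddResidues (h : 2 * a ≤ n) : #(oddResidues n a) = a := by
  rw [oddResidues, card_image_of_injOn, card_range]
  intro i hi j hj hij
  simp only [coe_range, Set.mem_Iio] at hi hj
  have := ZMod.eq_of_natCast_eq_of_lt (by omega) (by omega) hij
  omega

lemma natCast_notMem_oddResidues (h : 2 * a + 1 < n) :
    ((2 * a + 1 : ℕ) : ZMod n) ∉ oddResidues n a := by
  simp only [oddResidues, mem_image, mem_range, not_exists, not_and]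
  intro k hk hka
  have := ZMod.eq_of_natCast_eq_of_lt (by omega) h hka
  omega

lemma castHom_natCast_two_mul_add_one (hn : 2 ∣ n) (k : ℕ) :
    (ZMod.castHom hn (ZMod 2)).toAddMonoidHom ((2 * k + 1 : ℕ) : ZMod n) = 1 := by
  rw [RingHom.toAddMonoidHom_eq_coe, AddMonoidHom.coe_coe, map_natCast, ← ZMod.natCast_mod,
    show (2 * k + 1) % 2 = 1 by omega, Nat.cast_one]

lemma ZMod.natCast_ne_natCast_of_lt {i j : ℕ} (hi : i < n) (hj : j < n) (hij : i ≠ j) :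
    (i : ZMod n) ≠ j :=
  fun h => hij (ZMod.eq_of_natCast_eq_of_lt hi hj h)

lemma sumGraph_oddResidues_adj_natCast {i j k : ℕ} (hi : i < n) (hj : j < n) (hk : k < a)
    (h : i + j = 2 * k + 1) : (sumGraph (oddResidues n a : Set (ZMod n))).Adj i j :=
  ⟨ZMod.natCast_ne_natCast_of_lt hi hj (by omega),
    by rw [← Nat.cast_add, h]; exact natCast_mem_oddResidues hk⟩

lemma exists_isCycle_sumGraph_oddResidues (ha : 3 ≤ a) (hn : 4 ≤ n) :
    ∃ (u : ZMod n) (w : (sumGraph (oddResidues n a : Set (ZMod n))).Walk u u),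
      w.IsCycle ∧ w.length = 4 := by
  refine ⟨_, _, Walk.isCycle_cons_cons_cons_cons
    (sumGraph_oddResidues_adj_natCast (i := 0) (j := 1) (k := 0) ?_ ?_ ?_ rfl)
    (sumGraph_oddResidues_adj_natCast (i := 1) (j := 2) (k := 1) ?_ ?_ ?_ rfl)
    (sumGraph_oddResidues_adj_natCast (i := 2) (j := 3) (k := 2) ?_ ?_ ?_ rfl)
    (sumGraph_oddResidues_adj_natCast (i := 3) (j := 0) (k := 1) ?_ ?_ ?_ rfl)
    (ZMod.natCast_ne_natCast_of_lt ?_ ?_ ?_) (ZMod.natCast_ne_natCast_of_lt ?_ ?_ ?_), ?_⟩ <;>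
  first | rfl | omega

theorem exists_isWGraph_four (hn : Even n) (ha : 3 ≤ a) (han : 2 * a + 2 ≤ n) :
    ∃ L H : SimpleGraph (ZMod n), IsWGraph L H a (n - a - 2) 4 := by
  have : NeZero n := ⟨by omega⟩
  set c : ZMod n := ((2 * a + 1 : ℕ) : ZMod n)
  set φ := (ZMod.castHom (even_iff_two_dvd.mp hn) (ZMod 2)).toAddMonoidHom
  have hodd : ∀ s ∈ insert c (oddResidues n a), φ s = 1 := by
    simp only [mem_insert, oddResidues, mem_image]
    rintro s (rfl | ⟨k, -, rfl⟩) <;> apply castHom_natCast_two_mul_add_one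
  have hcard : #(insert c (oddResidues n a)) = a + 1 := by
    rw [card_insert_of_notMem (natCast_notMem_oddResidues (by omega)),
      card_oddResidues (by omega)]
  have hoddL : ∀ s ∈ oddResidues n a, φ s = 1 := fun s hs => hodd s (mem_insert_of_mem hs)
  refine ⟨sumGraph ↑(oddResidues n a), sumGraph (↑(insert c (oddResidues n a)))ᶜ,
    isWGraph_four_of_cliqueFree_three ?_ (fun x => ?_) (fun x => ?_) ?_
      (exists_isCycle_sumGraph_oddResidues ha (by omega))⟩
  · exact disjoint_iff.mpr (by ext x y; simp; tauto)
  · rw [ncard_neighborSet_sumGraph_of_add_self_notMem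
      (add_self_notMem_of_forall_eq_one φ hoddL x), Set.ncard_coe_finset,
      card_oddResidues (by omega)]
  · rw [ncard_neighborSet_sumGraph_of_add_self_mem (add_self_notMem_of_forall_eq_one φ hodd x),
      Set.ncard_compl, Set.ncard_coe_finset, hcard, Nat.card_zmod]
    omega
  · exact (colorable_two_sumGraph φ hoddL).cliqueFree (by norm_num)

/-- For `3 ≤ a ≤ b` both even with `b ≤ 3a/2 - 2`, every `(a,b)`-regular
weighted graph of girth 4 has at least `a+b+2` vertices, and this bound is
attained; hence `n(a,b,4) = a+b+2`. -/
theorem stmt_15 (a b : ℕ) (ha : 3 ≤ a) (hab : a ≤ b)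
    (hae : a % 2 = 0) (hbe : b % 2 = 0) (hsmall : b ≤ 3 * a / 2 - 2) :
    IsLeast {n : ℕ | ∃ L H : SimpleGraph (Fin n), IsWGraph L H a b 4}
      (a + b + 2) := by
  constructor
  · obtain ⟨L, H, hG⟩ := exists_isWGraph_four (n := a + b + 2) (Nat.even_iff.mpr (by omega)) ha
      (by omega)
    rw [show a + b + 2 - a - 2 = b by omega] at hG
    -- `ZMod (a + b + 2)` is `Fin (a + b + 2)` by definition
    exact ⟨L, H, hG⟩
  · rintro n ⟨L, H, hG⟩
    simpa using hG.add_add_two_le_card (Nat.even_iff.mpr (by omega)) (by omega)
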